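/- The 2-dimensional algebra E_2 with basis e_1, e_2 and nonzero products e_1e_1=-e_1, e_1e_2=-3e_2, e_2e_1=3e_2 satisfies both standard degree-3 identities st^3_1 and st^3_2 (i.e. Σ_{σ∈S_3} sgn(σ)(x_{σ(1)}x_{σ(2)})x_{σ(3)}=0 and Σ_{σ∈S_3} sgn(σ) x_{σ(3)}(x_{σ(2)}x_{σ(1)})=0), is terminal, but is neither a left Leibniz algebra nor a Jordan algebra. -/

import Mathlib

def tbl (F : Type*) [Field F] : Fin 2 → Fin 2 → Fin 2 → F :=
  ![![![-1, 0], ![0, -3]], ![![0, 3], ![0, 0]]]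

def mul (F : Type*) [Field F] (x y : Fin 2 → F) : Fin 2 → F :=
  fun k => ∑ i, ∑ j, x i * y j * tbl F i j k

def termF (F : Type*) [Field F] (a b : Fin 2 → F) : Fin 2 → F :=
  (3 : F)⁻¹ • ((2 : F) • mul F a b + mul F b a)

/-!
Three vectors in a 2-dimensional space are linearly dependent, so every alternating trilinear map
on it vanishes. Antisymmetrising the trilinear maps `(x, y, z) ↦ (xy)z` and `(x, y, z) ↦ z(yx)`
therefore gives zero: the standard identities of degree 3 hold in every 2-dimensional algebra.
The other claims are coordinate computations with `(xy)₀ = -x₀y₀` and `(xy)₁ = 3(x₁y₀ - x₀y₁)`.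
-/

open Module Equiv

theorem MultilinearMap.alternatization_eq_zero_of_finrank_lt {K V N ι : Type*} [Field K]
    [AddCommGroup V] [Module K V] [Module.Finite K V] [AddCommGroup N] [Module K N]
    [Fintype ι] [DecidableEq ι] (m : MultilinearMap K (fun _ : ι => V) N)
    (h : finrank K V < Fintype.card ι) : alternatization m = 0 := by
  ext v
  refine (alternatization m).map_linearDependent v fun hv => ?_
  exact h.not_ge hv.fintype_card_le_finrank

namespace LinearMap

variable {K V : Type*} [Field K] [AddCommGroup V] [Module K V]

def leftNormed₃ (B : V →ₗ[K] V →ₗ[K] V) : MultilinearMap K (fun _ : Fin 3 => V) V :=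
  -- `mk'` fixes the `DecidableEq (Fin 3)` instance, so that `simp` can evaluate the updates
  .mk' (fun v => B (B (v 0) (v 1)) (v 2))
    (fun v i x y => by fin_cases i <;> simp)
    (fun v i c x => by fin_cases i <;> simp)

theorem sum_sign_smul_leftNormed₃_eq_zero [Module.Finite K V] (hV : finrank K V < 3)
    (B : V →ₗ[K] V →ₗ[K] V) (x : Fin 3 → V) :
    ∑ σ : Perm (Fin 3), (Perm.sign σ : ℤ) • B (B (x (σ 0)) (x (σ 1))) (x (σ 2)) = 0 := by
  have := congr($(B.leftNormed₃.alternatization_eq_zero_of_finrank_lt (by simpa using hV)) x)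
  simpa [MultilinearMap.alternatization_apply, Units.smul_def, leftNormed₃] using this

end LinearMap

section E2

variable {F : Type*} [Field F]

@[simp]
theorem mul_apply_zero (x y : Fin 2 → F) : mul F x y 0 = -(x 0 * y 0) := by
  simp [mul, tbl, Fin.sum_univ_succ]

@[simp]
theorem mul_apply_one (x y : Fin 2 → F) : mul F x y 1 = 3 * (x 1 * y 0 - x 0 * y 1) := by
  simp [mul, tbl, Fin.sum_univ_succ]
  ring

variable (F) in
def mulₗ : (Fin 2 → F) →ₗ[F] (Fin 2 → F) →ₗ[F] (Fin 2 → F) :=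
  LinearMap.mk₂ F (mul F)
    (fun _ _ _ => by ext k; fin_cases k <;> simp <;> ring)
    (fun _ _ _ => by ext k; fin_cases k <;> simp <;> ring)
    (fun _ _ _ => by ext k; fin_cases k <;> simp <;> ring)
    (fun _ _ _ => by ext k; fin_cases k <;> simp <;> ring)

theorem mul_terminal (h3 : (3 : F) ≠ 0) (a b x y : Fin 2 → F) :
    mul F b (mul F a (mul F x y) - mul F (mul F a x) y - mul F x (mul F a y))
        - mul F a (mul F (mul F b x) y) + mul F (mul F a (mul F b x)) y
        + mul F (mul F b x) (mul F a y) - mul F a (mul F x (mul F b y))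
        + mul F (mul F a x) (mul F b y) + mul F x (mul F a (mul F b y))
      = - mul F (termF F a b) (mul F x y) + mul F (mul F (termF F a b) x) y
        + mul F x (mul F (termF F a b) y) := by
  ext k
  fin_cases k <;> simp [termF] <;> field_simp <;> ring

theorem mul_not_leftLeibniz (h3 : (3 : F) ≠ 0) :
    ¬ ∀ x y z : Fin 2 → F, mul F x (mul F y z) = mul F (mul F x y) z + mul F y (mul F x z) := by
  intro h
  -- with `x = y = e₁`, `z = e₂` the left side is `9e₂` and the right side `12e₂`
  exact h3 (by simpa using congrFun (h ![1, 0] ![1, 0] ![0, 1]) 1)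

theorem mul_not_comm (h6 : (6 : F) ≠ 0) : ¬ ∀ x y : Fin 2 → F, mul F x y = mul F y x := by
  intro h
  have h3 : (-3 : F) = 3 := by simpa using congrFun (h ![1, 0] ![0, 1]) 1
  exact h6 (by linear_combination -h3)

end E2

/-- `E₂` satisfies `st³₁` and `st³₂`, is terminal, but is neither left Leibniz nor Jordan. -/
theorem E2_properties (F : Type*) [Field F] [CharZero F] :
    (∀ x : Fin 3 → (Fin 2 → F),
      ∑ σ : Equiv.Perm (Fin 3), (Equiv.Perm.sign σ : ℤ) •
        mul F (mul F (x (σ 0)) (x (σ 1))) (x (σ 2)) = 0) ∧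
    (∀ x : Fin 3 → (Fin 2 → F),
      ∑ σ : Equiv.Perm (Fin 3), (Equiv.Perm.sign σ : ℤ) •
        mul F (x (σ 2)) (mul F (x (σ 1)) (x (σ 0))) = 0) ∧
    (∀ a b x y : Fin 2 → F,
      mul F b (mul F a (mul F x y) - mul F (mul F a x) y - mul F x (mul F a y)) - mul F a (mul F (mul F b x) y) + mul F (mul F a (mul F b x)) y + mul F (mul F b x) (mul F a y) - mul F a (mul F x (mul F b y)) + mul F (mul F a x) (mul F b y) + mul F x (mul F a (mul F b y))
        = - mul F (termF F a b) (mul F x y) + mul F (mul F (termF F a b) x) y + mul F x (mul F (termF F a b) y)) ∧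
    ¬ (∀ x y z : Fin 2 → F, mul F x (mul F y z) = mul F (mul F x y) z + mul F y (mul F x z)) ∧
    ¬ ((∀ x y : Fin 2 → F, mul F x y = mul F y x) ∧
        ∀ x y : Fin 2 → F, mul F (mul F (mul F x x) y) x = mul F (mul F x x) (mul F y x)) := by
  have hdim : finrank F (Fin 2 → F) < 3 := by simp
  refine ⟨(mulₗ F).sum_sign_smul_leftNormed₃_eq_zero hdim,
    (mulₗ F).flip.sum_sign_smul_leftNormed₃_eq_zero hdim, mul_terminal three_ne_zero,
    mul_not_leftLeibniz three_ne_zero, fun h => mul_not_comm (by norm_num) h.1⟩
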